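/- arXiv:2412.20168 — 6 statements merged into one kernel-verified Lean document; each statement's English description precedes it below -/
import Mathlib

section
/- Let K be a nonempty closed convex cone in ℝ^m that is pointed and solid, and let A ⊆ ℝ^m be nonempty and compact. Then A satisfies the domination property with respect to K: A + K = Min(A, K) + K. -/
open Set Pointwise

/-- Domination property: for a nonempty compact set `A ⊆ ℝ^m` and a
nonempty closed convex pointed solid cone `K`, `A + K = Min(A, K) + K`, where
`Min(A, K) = {y ∈ A | (y - K) ∩ A = {y}}`. -/
theorem statement6 {m : ℕ} (K : Set (EuclideanSpace ℝ (Fin m)))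
    (hKne : K.Nonempty) (hKclosed : IsClosed K) (hKconv : Convex ℝ K)
    (hKcone : ∀ t : ℝ, 0 ≤ t → ∀ y ∈ K, t • y ∈ K)
    (hKpointed : K ∩ (-K) = {0}) (hKsolid : (interior K).Nonempty)
    (A : Set (EuclideanSpace ℝ (Fin m)))
    (hAne : A.Nonempty) (hAcomp : IsCompact A) :
    A + K = {y ∈ A | {z : EuclideanSpace ℝ (Fin m) | y - z ∈ K} ∩ A = {y}} + K := by
  -- 0 ∈ K
  have h0K : (0 : EuclideanSpace ℝ (Fin m)) ∈ K := by
    have : (0 : EuclideanSpace ℝ (Fin m)) ∈ ({0} : Set (EuclideanSpace ℝ (Fin m))) := rfl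
    rw [← hKpointed] at this
    exact this.1
  -- K is closed under addition
  have hKadd : ∀ x ∈ K, ∀ y ∈ K, x + y ∈ K := by
    intro x hx y hy
    have h1 : (1/2 : ℝ) • x + (1/2 : ℝ) • y ∈ K := by
      apply hKconv hx hy <;> norm_num
    have h2 := hKcone 2 (by norm_num) _ h1
    have heq : (2 : ℝ) • ((1/2 : ℝ) • x + (1/2 : ℝ) • y) = x + y := by
      rw [smul_add, smul_smul, smul_smul]
      norm_num
    rwa [heq] at h2
  -- antisymmetry
  have hKanti : ∀ x : EuclideanSpace ℝ (Fin m), x ∈ K → -x ∈ K → x = 0 := by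
    intro x hx hnx
    have hmem : x ∈ K ∩ (-K) := ⟨hx, by simpa using hnx⟩
    rw [hKpointed] at hmem
    exact hmem
  apply Set.Subset.antisymm
  · -- hard direction
    rintro x hx
    rw [Set.mem_add] at hx
    obtain ⟨a, ha, k, hk, hak⟩ := hx
    -- A' = (a - K) ∩ A
    set A' : Set (EuclideanSpace ℝ (Fin m)) := {z | a - z ∈ K} ∩ A with hA'def
    have haA' : a ∈ A' := ⟨by simp [h0K], ha⟩
    have hA'closed : IsClosed A' := by
      apply IsClosed.inter _ hAcomp.isClosed
      have : {z : EuclideanSpace ℝ (Fin m) | a - z ∈ K} = (fun z => a - z) ⁻¹' K := rfl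
      rw [this]
      exact hKclosed.preimage (continuous_const.sub continuous_id)
    have hA'comp : IsCompact A' :=
      hAcomp.of_isClosed_subset hA'closed Set.inter_subset_right
    -- Zorn's lemma on A' with relation r u v ↔ u - v ∈ K (v below u)
    let r : A' → A' → Prop := fun u v => (u : EuclideanSpace ℝ (Fin m)) - v ∈ K
    haveI : IsRefl A' r := ⟨fun u => by simp [r, h0K]⟩
    have rtrans : ∀ {u v w : A'}, r u v → r v w → r u w := by
      intro u v w huv hvw
      have := hKadd _ huv _ hvw
      simpa [r, sub_add_sub_cancel] using this
    have hchains : ∀ c : Set A', IsChain r c → ∃ ub, ∀ u ∈ c, r u ub := by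
      intro c hc
      rcases c.eq_empty_or_nonempty with hce | hcne
      · exact ⟨⟨a, haA'⟩, by simp [hce]⟩
      · haveI : Nonempty c := hcne.to_subtype
        set t : c → Set (EuclideanSpace ℝ (Fin m)) :=
          fun u => {z ∈ A' | ((u : A') : EuclideanSpace ℝ (Fin m)) - z ∈ K} with htdef
        have htsub : ∀ u, t u ⊆ A := fun u z hz => hz.1.2
        have htn : ∀ u, (t u).Nonempty := fun u =>
          ⟨(u : A'), (u : A').2, by simp [h0K]⟩
        have htcl : ∀ u, IsClosed (t u) := by
          intro u
          apply hA'closed.inter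
          show IsClosed ((fun z => ((u : A') : EuclideanSpace ℝ (Fin m)) - z) ⁻¹' K)
          exact hKclosed.preimage (continuous_const.sub continuous_id)
        have htc : ∀ u, IsCompact (t u) := fun u =>
          hAcomp.of_isClosed_subset (htcl u) (htsub u)
        have htd : Directed (· ⊇ ·) t := by
          intro u v
          rcases hc.total u.2 v.2 with h | h
          · refine ⟨v, ?_, fun z hz => hz⟩
            intro z hz
            refine ⟨hz.1, ?_⟩
            have := hKadd _ h _ hz.2
            simpa [sub_add_sub_cancel] using this
          · refine ⟨u, fun z hz => hz, ?_⟩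
            intro z hz
            refine ⟨hz.1, ?_⟩
            have := hKadd _ h _ hz.2
            simpa [sub_add_sub_cancel] using this
        obtain ⟨w, hw⟩ :=
          IsCompact.nonempty_iInter_of_directed_nonempty_isCompact_isClosed t htd htn htc htcl
        simp only [Set.mem_iInter] at hw
        have hwA' : w ∈ A' := (hw ⟨hcne.choose, hcne.choose_spec⟩).1
        exact ⟨⟨w, hwA'⟩, fun u hu => (hw ⟨u, hu⟩).2⟩
    obtain ⟨y, hy⟩ := exists_maximal_of_chains_bounded hchains (fun {u v w} => rtrans)
    -- y is minimal in A' and hence in A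
    have hyA' : (y : EuclideanSpace ℝ (Fin m)) ∈ A' := y.2
    have hyA : (y : EuclideanSpace ℝ (Fin m)) ∈ A := hyA'.2
    have hymin : ∀ z ∈ A, (y : EuclideanSpace ℝ (Fin m)) - z ∈ K →
        z = (y : EuclideanSpace ℝ (Fin m)) := by
      intro z hz hyz
      have hzA' : z ∈ A' := by
        refine ⟨?_, hz⟩
        have := hKadd _ hyA'.1 _ hyz
        simpa [sub_add_sub_cancel] using this
      have hr := hy ⟨z, hzA'⟩ hyz
      have hzy0 : (y : EuclideanSpace ℝ (Fin m)) - z = 0 := by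
        apply hKanti _ hyz
        simpa [neg_sub] using hr
      exact (sub_eq_zero.mp hzy0).symm
    rw [Set.mem_add]
    refine ⟨y, ⟨hyA, ?_⟩, (a - y) + k, hKadd _ hyA'.1 _ hk, ?_⟩
    · ext z
      simp only [Set.mem_inter_iff, Set.mem_setOf_eq, Set.mem_singleton_iff]
      constructor
      · rintro ⟨h1, h2⟩
        exact hymin z h2 h1
      · rintro rfl
        exact ⟨by simp [h0K], hyA⟩
    · rw [← hak]; abel
  · -- easy direction
    intro x hx
    rw [Set.mem_add] at hx ⊢
    obtain ⟨y, hy, k, hk, h⟩ := hx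
    exact ⟨y, hy.1, k, hk, h⟩
end

section
/- Fix x̄ ∈ ℝ^n and an index tuple a = (a_1, …, a_ω), and let u ∈ ℝ^n be the unique minimizer of d ↦ 𝓕^a(x̄, d) + ½‖d‖² over ℝ^n. (i) If for every d ∈ ℝ^n there exists j ∈ {1,…,ω} with ∇f^{a_j}(x̄)ᵀd ∉ −int(K), then u = 0 and the minimum value is 0. (ii) If there exists d ∈ ℝ^n with ∇f^{a_j}(x̄)ᵀd ∈ −int(K) for all j ∈ {1,…,ω}, then u ≠ 0, the minimum value is < 0, and 𝓕^a(x̄, u) < −½‖u‖². -/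
/-!
The Gerstewitz function `ψ_e` of a convex cone `K` is positively homogeneous, so `ψ_e 0 = 0`;
it is negative exactly on `-int K`, since `ψ_e y < 0` puts `-y` in `K + int K ⊆ int K`.
Hence `φ = 𝓕^a(x̄, ·)` is positively homogeneous with `φ 0 = 0`. If `φ u ≥ 0` at the minimizer
`u` of `φ + ½‖·‖²`, comparing with `d = 0` forces `u = 0`. If `φ d < 0`, then along the ray
`t ↦ t • d` the value `t (φ d + ½ t ‖d‖²)` is negative for small `t > 0`, so the minimum is
negative and `u ≠ 0`.
-/

open Set Pointwise

/-- `𝓕^a(x, d) = max_{1 ≤ j ≤ ω} ψ_e(∇f^{a_j}(x)ᵀ d)`. -/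
noncomputable def Fcal {n m p : ℕ} (ψ : EuclideanSpace ℝ (Fin m) → ℝ)
    (f : Fin p → EuclideanSpace ℝ (Fin n) → EuclideanSpace ℝ (Fin m))
    {ω : ℕ} (hω : 0 < ω) (a : Fin ω → Fin p)
    (x d : EuclideanSpace ℝ (Fin n)) : ℝ :=
  Finset.univ.sup' (Finset.univ_nonempty_iff.mpr ⟨⟨0, hω⟩⟩) fun j =>
    ψ (fderiv ℝ (f (a j)) x d)

open Filter Topology

namespace ConvexCone

variable {E : Type*} [AddCommGroup E] [Module ℝ E] [TopologicalSpace E] {C : ConvexCone ℝ E}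

theorem smul_mem_interior [ContinuousConstSMul ℝ E] {c : ℝ} (hc : 0 < c) {x : E}
    (hx : x ∈ interior (C : Set E)) : c • x ∈ interior (C : Set E) := by
  have hsub : c • (C : Set E) ⊆ C := Set.smul_set_subset_iff.2 fun _ hy => C.smul_mem hc hy
  exact interior_mono hsub <| (interior_smul₀ hc.ne' (C : Set E)).symm ▸ Set.smul_mem_smul_set hx

theorem add_mem_interior [IsTopologicalAddGroup E] {k x : E} (hk : k ∈ C)
    (hx : x ∈ interior (C : Set E)) : k + x ∈ interior (C : Set E) := by
  have hsub : (C : Set E) + C ⊆ C := Set.add_subset_iff.2 fun _ hy _ hz => C.add_mem hy hz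
  exact interior_mono hsub (subset_interior_add_right (Set.add_mem_add hk hx))

end ConvexCone

section Gerstewitz

variable {E : Type*} [AddCommGroup E] [Module ℝ E] {C : ConvexCone ℝ E} {e : E} {ψ : E → ℝ}

theorem gerstewitz_smul_of_pos (hψ : ∀ y, IsLeast {t : ℝ | t • e - y ∈ C} (ψ y))
    {c : ℝ} (hc : 0 < c) (y : E) : ψ (c • y) = c * ψ y := by
  refine (hψ (c • y)).unique ⟨?_, fun s hs => ?_⟩
  · show (c * ψ y) • e - c • y ∈ C
    simpa only [mul_smul, smul_sub] using C.smul_mem hc (hψ y).1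
  · have hmem : (c⁻¹ * s) • e - y ∈ C := by
      simpa only [mul_smul, smul_sub, inv_smul_smul₀ hc.ne'] using C.smul_mem (inv_pos.2 hc) hs
    rw [← le_div_iff₀' hc, ← inv_mul_eq_div]
    exact (hψ y).2 hmem

theorem gerstewitz_zero (hψ : ∀ y, IsLeast {t : ℝ | t • e - y ∈ C} (ψ y)) : ψ 0 = 0 := by
  have h := gerstewitz_smul_of_pos hψ two_pos (0 : E)
  rw [smul_zero] at h
  linarith

variable [TopologicalSpace E] [IsTopologicalAddGroup E] [ContinuousSMul ℝ E]

theorem gerstewitz_neg_of_mem_neg_interior (hψ : ∀ y, IsLeast {t : ℝ | t • e - y ∈ C} (ψ y))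
    {y : E} (hy : y ∈ -interior (C : Set E)) : ψ y < 0 := by
  have hnhds : ∀ᶠ s in 𝓝 (0 : ℝ), -y - s • e ∈ interior (C : Set E) := by
    refine (isOpen_interior.preimage (by fun_prop)).mem_nhds ?_
    simpa using hy
  obtain ⟨s, hsC, hs⟩ :=
    ((hnhds.filter_mono nhdsWithin_le_nhds).and (self_mem_nhdsWithin (s := Ioi 0))).exists
  have hle : ψ y ≤ -s := (hψ y).2 <| by
    simpa [neg_smul, sub_eq_add_neg, add_comm] using interior_subset hsC
  exact hle.trans_lt (neg_neg_of_pos hs)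

theorem gerstewitz_nonneg_of_notMem_neg_interior
    (hψ : ∀ y, IsLeast {t : ℝ | t • e - y ∈ C} (ψ y)) (he : e ∈ interior (C : Set E))
    {y : E} (hy : y ∉ -interior (C : Set E)) : 0 ≤ ψ y := by
  by_contra! hneg
  refine hy (Set.mem_neg.2 ?_)
  have hsplit : -y = (ψ y • e - y) + (-ψ y) • e := by module
  rw [hsplit]
  exact C.add_mem_interior (hψ y).1 (C.smul_mem_interior (neg_pos.2 hneg) he)

end Gerstewitz

section Fcal

variable {n m p ω : ℕ} {ψ : EuclideanSpace ℝ (Fin m) → ℝ}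
  {f : Fin p → EuclideanSpace ℝ (Fin n) → EuclideanSpace ℝ (Fin m)} {hω : 0 < ω}
  {a : Fin ω → Fin p} {x : EuclideanSpace ℝ (Fin n)}

theorem le_Fcal (j : Fin ω) (d : EuclideanSpace ℝ (Fin n)) :
    ψ (fderiv ℝ (f (a j)) x d) ≤ Fcal ψ f hω a x d :=
  Finset.le_sup' (fun j => ψ (fderiv ℝ (f (a j)) x d)) (Finset.mem_univ j)

theorem Fcal_lt_iff {d : EuclideanSpace ℝ (Fin n)} {c : ℝ} :
    Fcal ψ f hω a x d < c ↔ ∀ j, ψ (fderiv ℝ (f (a j)) x d) < c := by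
  simp [Fcal, Finset.sup'_lt_iff]

theorem Fcal_zero (hψ : ψ 0 = 0) : Fcal ψ f hω a x 0 = 0 := by
  simp [Fcal, hψ]

theorem Fcal_smul_of_pos (hψ : ∀ c : ℝ, 0 < c → ∀ y, ψ (c • y) = c * ψ y) {c : ℝ} (hc : 0 < c)
    (d : EuclideanSpace ℝ (Fin n)) : Fcal ψ f hω a x (c • d) = c * Fcal ψ f hω a x d := by
  simp only [Fcal, map_smul, hψ c hc]
  exact (Finset.apply_sup'_eq_sup'_comp _ (c * ·) fun _ _ => mul_max_of_nonneg _ _ hc.le).symm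

end Fcal

section Minimizer

variable {V : Type*} [NormedAddCommGroup V] {φ : V → ℝ} {u : V}

theorem eq_zero_of_isMinimizer_of_nonneg (hφ : φ 0 = 0)
    (hu : ∀ d, φ u + 1 / 2 * ‖u‖ ^ 2 ≤ φ d + 1 / 2 * ‖d‖ ^ 2) (hnn : 0 ≤ φ u) :
    u = 0 ∧ φ u + 1 / 2 * ‖u‖ ^ 2 = 0 := by
  have hle : φ u + 1 / 2 * ‖u‖ ^ 2 ≤ 0 := by simpa [hφ] using hu 0
  have hu0 : u = 0 := norm_eq_zero.1 <| pow_eq_zero_iff two_ne_zero |>.1 <|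
    le_antisymm (by linarith) (sq_nonneg _)
  subst hu0
  simp [hφ]

theorem exists_add_half_sq_norm_neg [NormedSpace ℝ V]
    (hφ : ∀ c : ℝ, 0 < c → ∀ v, φ (c • v) = c * φ v)
    {d : V} (hd : φ d < 0) : ∃ v, φ v + 1 / 2 * ‖v‖ ^ 2 < 0 := by
  set t := -φ d / (‖d‖ ^ 2 + 1)
  have ht : 0 < t := div_pos (neg_pos.2 hd) (by positivity)
  have hsmall : t * ‖d‖ ^ 2 ≤ -φ d := calc
    t * ‖d‖ ^ 2 ≤ t * (‖d‖ ^ 2 + 1) := mul_le_mul_of_nonneg_left (by linarith) ht.le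
    _ = -φ d := div_mul_cancel₀ _ (by positivity)
  refine ⟨t • d, ?_⟩
  calc φ (t • d) + 1 / 2 * ‖t • d‖ ^ 2 = t * (φ d + 1 / 2 * (t * ‖d‖ ^ 2)) := by
        rw [hφ t ht, norm_smul, Real.norm_of_nonneg ht.le]; ring
    _ < 0 := mul_neg_of_pos_of_neg ht (by linarith)

end Minimizer

theorem statement8_general {n m p : ℕ} (K : Set (EuclideanSpace ℝ (Fin m)))
    (hKconv : Convex ℝ K)
    (hKcone : ∀ t : ℝ, 0 ≤ t → ∀ y ∈ K, t • y ∈ K)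
    (e : EuclideanSpace ℝ (Fin m)) (he : e ∈ interior K)
    (ψ : EuclideanSpace ℝ (Fin m) → ℝ)
    (hψ : ∀ y, IsLeast {t : ℝ | t • e - y ∈ K} (ψ y))
    (f : Fin p → EuclideanSpace ℝ (Fin n) → EuclideanSpace ℝ (Fin m))
    {ω : ℕ} (hω : 0 < ω) (a : Fin ω → Fin p)
    (xb : EuclideanSpace ℝ (Fin n)) (u : EuclideanSpace ℝ (Fin n))
    (hu : ∀ d, Fcal ψ f hω a xb u + (1 / 2) * ‖u‖ ^ 2 ≤
      Fcal ψ f hω a xb d + (1 / 2) * ‖d‖ ^ 2) :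
    ((∀ d : EuclideanSpace ℝ (Fin n), ∃ j : Fin ω,
        fderiv ℝ (f (a j)) xb d ∉ -(interior K)) →
      u = 0 ∧ Fcal ψ f hω a xb u + (1 / 2) * ‖u‖ ^ 2 = 0) ∧
    ((∃ d : EuclideanSpace ℝ (Fin n), ∀ j : Fin ω,
        fderiv ℝ (f (a j)) xb d ∈ -(interior K)) →
      u ≠ 0 ∧ Fcal ψ f hω a xb u + (1 / 2) * ‖u‖ ^ 2 < 0 ∧
      Fcal ψ f hω a xb u < -((1 / 2) * ‖u‖ ^ 2)) := by
  let C : ConvexCone ℝ (EuclideanSpace ℝ (Fin m)) :=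
    { carrier := K
      smul_mem' := fun c hc y hy => hKcone c hc.le y hy
      add_mem' := fun x hx y hy => by
        simpa [smul_add, ← mul_smul] using
          hKcone 2 two_pos.le _ (hKconv hx hy one_half_pos.le one_half_pos.le (add_halves 1)) }
  have hψC : ∀ y, IsLeast {t : ℝ | t • e - y ∈ C} (ψ y) := hψ
  have hφ0 : Fcal ψ f hω a xb 0 = 0 := Fcal_zero (gerstewitz_zero hψC)
  have hφ : ∀ c : ℝ, 0 < c → ∀ d, Fcal ψ f hω a xb (c • d) = c * Fcal ψ f hω a xb d :=
    fun c hc => Fcal_smul_of_pos (fun _ h => gerstewitz_smul_of_pos hψC h) hc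
  constructor
  · intro hcase
    obtain ⟨j, hj⟩ := hcase u
    exact eq_zero_of_isMinimizer_of_nonneg hφ0 hu
      ((gerstewitz_nonneg_of_notMem_neg_interior hψC he hj).trans (le_Fcal j u))
  · rintro ⟨d, hd⟩
    obtain ⟨v, hv⟩ := exists_add_half_sq_norm_neg hφ
      (Fcal_lt_iff.2 fun j => gerstewitz_neg_of_mem_neg_interior hψC (hd j))
    have hval := (hu v).trans_lt hv
    refine ⟨fun hu0 => ?_, hval, by linarith⟩
    simp [hu0, hφ0] at hval

/-- Let `u` be the unique minimizer of `d ↦ 𝓕^a(x̄, d) + ½‖d‖²`.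
(i) If for every `d` there is `j` with `∇f^{a_j}(x̄)ᵀd ∉ -int K`, then `u = 0` and
the minimum value is `0`. (ii) If there is `d` with `∇f^{a_j}(x̄)ᵀd ∈ -int K` for all
`j`, then `u ≠ 0`, the minimum value is `< 0`, and `𝓕^a(x̄, u) < -½‖u‖²`. -/
theorem statement8 {n m p : ℕ} (K : Set (EuclideanSpace ℝ (Fin m)))
    (hKne : K.Nonempty) (hKclosed : IsClosed K) (hKconv : Convex ℝ K)
    (hKcone : ∀ t : ℝ, 0 ≤ t → ∀ y ∈ K, t • y ∈ K)
    (hKpointed : K ∩ (-K) = {0}) (hKsolid : (interior K).Nonempty)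
    (e : EuclideanSpace ℝ (Fin m)) (he : e ∈ interior K)
    (ψ : EuclideanSpace ℝ (Fin m) → ℝ)
    (hψ : ∀ y, IsLeast {t : ℝ | t • e - y ∈ K} (ψ y))
    (f : Fin p → EuclideanSpace ℝ (Fin n) → EuclideanSpace ℝ (Fin m))
    (hf : ∀ i, ContDiff ℝ 1 (f i))
    {ω : ℕ} (hω : 0 < ω) (a : Fin ω → Fin p)
    (xb : EuclideanSpace ℝ (Fin n)) (u : EuclideanSpace ℝ (Fin n))
    (hu : ∀ d, Fcal ψ f hω a xb u + (1 / 2) * ‖u‖ ^ 2 ≤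
      Fcal ψ f hω a xb d + (1 / 2) * ‖d‖ ^ 2) :
    ((∀ d : EuclideanSpace ℝ (Fin n), ∃ j : Fin ω,
        fderiv ℝ (f (a j)) xb d ∉ -(interior K)) →
      u = 0 ∧ Fcal ψ f hω a xb u + (1 / 2) * ‖u‖ ^ 2 = 0) ∧
    ((∃ d : EuclideanSpace ℝ (Fin n), ∀ j : Fin ω,
        fderiv ℝ (f (a j)) xb d ∈ -(interior K)) →
      u ≠ 0 ∧ Fcal ψ f hω a xb u + (1 / 2) * ‖u‖ ^ 2 < 0 ∧
      Fcal ψ f hω a xb u < -((1 / 2) * ‖u‖ ^ 2)) :=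
  statement8_general K hKconv hKcone e he ψ hψ f hω a xb u hu
end

section
/- Let x̄ ∈ ℝ^n and let a = (a_1, …, a_ω) be an index tuple such that F(x̄) ⊆ {f^{a_1}(x̄), …, f^{a_ω}(x̄)} + K. If d ∈ ℝ^n satisfies ∇f^{a_j}(x̄)ᵀd ∈ −int(K) for all j ∈ {1,…,ω}, then there exists ᾱ > 0 such that for all α ∈ (0, ᾱ): F(x̄) ⊆ F(x̄ + α·d) + int(K), i.e., F(x̄ + α·d) ≺^ℓ F(x̄). -/
open Set Pointwise Filter Topology

/-!
Along `d` every active selection `f^{a_j}` decreases strictly with respect to `K` for small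
steps: `f^{a_j}(x̄) - f^{a_j}(x̄ + αd) = -α ∇f^{a_j}(x̄)ᵀd + o(α)` lies in `int K`, since
`int K` is an open cone. Only finitely many `j` are involved, so one step bound `ᾱ` serves
them all, and `F(x̄) ⊆ {f^{a_j}(x̄)} + K ⊆ {f^{a_j}(x̄ + αd)} + int K + K ⊆ F(x̄ + αd) + int K`.
-/

section ConvexCone

variable {E : Type*} [AddCommGroup E] [Module ℝ E]
  {K : Set E} (hKconv : Convex ℝ K) (hKcone : ∀ t : ℝ, 0 ≤ t → ∀ y ∈ K, t • y ∈ K)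

include hKconv hKcone in
theorem add_mem_of_convex_of_smul_mem {u v : E} (hu : u ∈ K) (hv : v ∈ K) : u + v ∈ K := by
  have h := hKcone 2 zero_le_two _ (hKconv hu hv (by norm_num) (by norm_num) (add_halves 1))
  rwa [smul_add, smul_smul, smul_smul, mul_one_div_cancel two_ne_zero, one_smul, one_smul] at h

include hKconv hKcone in
theorem add_mem_interior_of_convex_of_smul_mem [TopologicalSpace E]
    [IsTopologicalAddGroup E] {u v : E}
    (hu : u ∈ interior K) (hv : v ∈ K) : u + v ∈ interior K := by
  have hsub : (· + v) '' interior K ⊆ K := by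
    rintro _ ⟨y, hy, rfl⟩
    exact add_mem_of_convex_of_smul_mem hKconv hKcone (interior_subset hy) hv
  exact interior_maximal hsub (isOpenMap_add_right v _ isOpen_interior) ⟨u, hu, rfl⟩

include hKcone in
theorem smul_mem_interior_of_smul_mem [TopologicalSpace E]
    [ContinuousConstSMul ℝ E] {t : ℝ} (ht : 0 < t) {u : E}
    (hu : u ∈ interior K) : t • u ∈ interior K := by
  have hscale : t • K ⊆ K := by
    rintro _ ⟨y, hy, rfl⟩
    exact hKcone t ht.le y hy
  have h : t • u ∈ interior (t • K) := by
    rw [interior_smul₀ ht.ne']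
    exact smul_mem_smul_set hu
  exact interior_mono hscale h

end ConvexCone

section Descent

variable {F : Type*} [NormedAddCommGroup F] [NormedSpace ℝ F]
  {K : Set F} (hKcone : ∀ t : ℝ, 0 ≤ t → ∀ y ∈ K, t • y ∈ K)

include hKcone in
theorem eventually_sub_mem_interior_of_hasDerivAt {c : ℝ → F} {v : F} (hc : HasDerivAt c v 0)
    (hv : v ∈ -interior K) : ∀ᶠ t in 𝓝[>] (0 : ℝ), c 0 - c t ∈ interior K := by
  have hslope : Tendsto (fun t => -slope c 0 t) (𝓝[>] 0) (𝓝 (-v)) :=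
    ((hasDerivAt_iff_tendsto_slope.mp hc).neg).mono_left
      (nhdsWithin_mono 0 fun _ ht => ne_of_gt ht)
  filter_upwards [hslope.eventually (isOpen_interior.mem_nhds hv), self_mem_nhdsWithin]
    with t ht (htpos : 0 < t)
  have hdiff : c 0 - c t = t • -slope c 0 t := by
    rw [slope_def_module, sub_zero, smul_neg, smul_smul, mul_inv_cancel₀ htpos.ne', one_smul,
      neg_sub]
  rw [hdiff]
  exact smul_mem_interior_of_smul_mem hKcone htpos ht

include hKcone in
theorem eventually_sub_mem_interior_of_fderiv_mem {E : Type*} [NormedAddCommGroup E]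
    [NormedSpace ℝ E] {g : E → F} {x : E} (hg : DifferentiableAt ℝ g x) {d : E}
    (hd : fderiv ℝ g x d ∈ -interior K) :
    ∀ᶠ t in 𝓝[>] (0 : ℝ), g x - g (x + t • d) ∈ interior K := by
  have hline : HasDerivAt (fun t : ℝ => x + t • d) d 0 := by
    simpa using ((hasDerivAt_id (0 : ℝ)).smul_const d).const_add x
  have hg' : HasFDerivAt g (fderiv ℝ g x) (x + (0 : ℝ) • d) := by
    simpa using hg.hasFDerivAt
  simpa using eventually_sub_mem_interior_of_hasDerivAt hKcone (hg'.comp_hasDerivAt 0 hline) hd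

end Descent

theorem subset_range_add_interior_of_sub_mem_interior {E ι : Type*} [AddCommGroup E]
    [Module ℝ E] [TopologicalSpace E] [IsTopologicalAddGroup E] {K S : Set E}
    (hKconv : Convex ℝ K) (hKcone : ∀ t : ℝ, 0 ≤ t → ∀ y ∈ K, t • y ∈ K) {u v : ι → E}
    (hS : S ⊆ range u + K) (huv : ∀ j, u j - v j ∈ interior K) :
    S ⊆ range v + interior K := by
  intro s hs
  obtain ⟨_, ⟨j, rfl⟩, k, hk, rfl⟩ := hS hs
  refine ⟨v j, ⟨j, rfl⟩, u j - v j + k,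
    add_mem_interior_of_convex_of_smul_mem hKconv hKcone (huv j) hk, by dsimp only; rw [← add_assoc, add_sub_cancel]⟩

theorem statement9_general {n m p : ℕ} (K : Set (EuclideanSpace ℝ (Fin m)))
    (hKconv : Convex ℝ K)
    (hKcone : ∀ t : ℝ, 0 ≤ t → ∀ y ∈ K, t • y ∈ K)
    (f : Fin p → EuclideanSpace ℝ (Fin n) → EuclideanSpace ℝ (Fin m))
    (hf : ∀ i, ContDiff ℝ 1 (f i))
    {ω : ℕ} (a : Fin ω → Fin p)
    (xb : EuclideanSpace ℝ (Fin n))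
    (hdom : Set.range (fun i => f i xb) ⊆ Set.range (fun j => f (a j) xb) + K)
    (d : EuclideanSpace ℝ (Fin n))
    (hd : ∀ j : Fin ω, fderiv ℝ (f (a j)) xb d ∈ -(interior K)) :
    ∃ αb : ℝ, 0 < αb ∧ ∀ α : ℝ, 0 < α → α < αb →
      Set.range (fun i => f i xb) ⊆
        Set.range (fun i => f i (xb + α • d)) + interior K := by
  have hdescent : ∀ᶠ α in 𝓝[>] (0 : ℝ),
      ∀ j, f (a j) xb - f (a j) (xb + α • d) ∈ interior K :=
    eventually_all.2 fun j => eventually_sub_mem_interior_of_fderiv_mem hKcone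
      ((hf (a j)).differentiable one_ne_zero xb) (hd j)
  obtain ⟨αb, hαb, hIoo⟩ := mem_nhdsGT_iff_exists_Ioo_subset.1 hdescent
  refine ⟨αb, hαb, fun α hα hlt => ?_⟩
  exact (subset_range_add_interior_of_sub_mem_interior hKconv hKcone hdom (hIoo ⟨hα, hlt⟩)).trans
    (add_subset_add_right (range_comp_subset_range a fun i => f i (xb + α • d)))

/-- If `F(x̄) ⊆ {f^{a_1}(x̄), …, f^{a_ω}(x̄)} + K` and `d` satisfies
`∇f^{a_j}(x̄)ᵀd ∈ -int K` for all `j`, then there is `ᾱ > 0` such that for all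
`α ∈ (0, ᾱ)`: `F(x̄) ⊆ F(x̄ + α•d) + int K`, i.e. `F(x̄ + α•d) ≺^ℓ F(x̄)`. -/
theorem statement9 {n m p : ℕ} (K : Set (EuclideanSpace ℝ (Fin m)))
    (hKne : K.Nonempty) (hKclosed : IsClosed K) (hKconv : Convex ℝ K)
    (hKcone : ∀ t : ℝ, 0 ≤ t → ∀ y ∈ K, t • y ∈ K)
    (hKpointed : K ∩ (-K) = {0}) (hKsolid : (interior K).Nonempty)
    (f : Fin p → EuclideanSpace ℝ (Fin n) → EuclideanSpace ℝ (Fin m))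
    (hf : ∀ i, ContDiff ℝ 1 (f i))
    {ω : ℕ} (hω : 0 < ω) (a : Fin ω → Fin p)
    (xb : EuclideanSpace ℝ (Fin n))
    (hdom : Set.range (fun i => f i xb) ⊆ Set.range (fun j => f (a j) xb) + K)
    (d : EuclideanSpace ℝ (Fin n))
    (hd : ∀ j : Fin ω, fderiv ℝ (f (a j)) xb d ∈ -(interior K)) :
    ∃ αb : ℝ, 0 < αb ∧ ∀ α : ℝ, 0 < α → α < αb →
      Set.range (fun i => f i xb) ⊆
        Set.range (fun i => f i (xb + α • d)) + interior K :=
  statement9_general K hKconv hKcone f hf a xb hdom d hd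
end

section
/- Let x̄, d ∈ ℝ^n, let a = (a_1, …, a_ω) be an index tuple with 𝓕^a(x̄, d) < 0, and let ρ ∈ (0, 1). Then there exists α̃ > 0 such that for every α ∈ (0, α̃] and every j ∈ {1,…,ω}: f^{a_j}(x̄ + α·d) − f^{a_j}(x̄) − ρ·α·𝓕^a(x̄, d)·e ∈ −K. -/
/-! Since `ψ_e(∇f^{a_j}(x̄)ᵀd) ≤ 𝓕` for every `j`, the cone contains `α (𝓕 e - ∇f^{a_j}(x̄)ᵀd)`.
Because `𝓕 < ρ 𝓕`, what remains is the slack `(ρ - 1) 𝓕 α e` minus the `o(α)` remainder of the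
first-order expansion; as `e` is interior, a ball of radius proportional to `α` around the
slack stays in `K`, and for small `α` the remainder lies in that ball. -/

open Set Pointwise

open Filter Topology

section Cone

variable {G : Type*} [NormedAddCommGroup G] [NormedSpace ℝ G] {K : Set G}

theorem add_mem_of_convex_of_smul_mem_s10 (hKconv : Convex ℝ K)
    (hKcone : ∀ t : ℝ, 0 ≤ t → ∀ y ∈ K, t • y ∈ K) {x y : G} (hx : x ∈ K) (hy : y ∈ K) :
    x + y ∈ K := by
  have hmid := hKcone 2 zero_le_two _ (hKconv hx hy (by norm_num : (0 : ℝ) ≤ 1 / 2)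
    (by norm_num : (0 : ℝ) ≤ 1 / 2) (by norm_num))
  rwa [show (2 : ℝ) • ((1 / 2 : ℝ) • x + (1 / 2 : ℝ) • y) = x + y by module] at hmid

theorem smul_sub_mem_of_isLeast_le (hKconv : Convex ℝ K)
    (hKcone : ∀ t : ℝ, 0 ≤ t → ∀ y ∈ K, t • y ∈ K) {e y : G} (heK : e ∈ K) {ψy s : ℝ}
    (hψ : IsLeast {t : ℝ | t • e - y ∈ K} ψy) (hs : ψy ≤ s) :
    s • e - y ∈ K := by
  have hsum := add_mem_of_convex_of_smul_mem_s10 hKconv hKcone hψ.1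
    (hKcone (s - ψy) (sub_nonneg.2 hs) e heK)
  rwa [show ψy • e - y + (s - ψy) • e = s • e - y by module] at hsum

theorem exists_smul_sub_mem_of_mem_interior
    (hKcone : ∀ t : ℝ, 0 ≤ t → ∀ y ∈ K, t • y ∈ K) {e : G} (he : e ∈ interior K) :
    ∃ ε > 0, ∀ (t : ℝ) (r : G), ‖r‖ < ε * t → t • e - r ∈ K := by
  obtain ⟨ε, hε, hball⟩ := Metric.isOpen_iff.mp isOpen_interior e he
  refine ⟨ε, hε, fun t r hr => ?_⟩
  have ht : 0 < t := pos_of_mul_pos_right ((norm_nonneg r).trans_lt hr) hε.le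
  have hnear : e - t⁻¹ • r ∈ K := by
    refine interior_subset (hball ?_)
    rw [Metric.mem_ball, dist_eq_norm, sub_sub_cancel_left, norm_neg, norm_smul,
      norm_inv, Real.norm_of_nonneg ht.le, inv_mul_lt_iff₀ ht, mul_comm]
    exact hr
  have hscaled := hKcone t ht.le _ hnear
  rwa [smul_sub, smul_smul, mul_inv_cancel₀ ht.ne', one_smul] at hscaled

variable {E : Type*} [NormedAddCommGroup E] [NormedSpace ℝ E]

theorem eventually_sub_sub_smul_mem_neg_of_smul_sub_fderiv_mem (hKconv : Convex ℝ K)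
    (hKcone : ∀ t : ℝ, 0 ≤ t → ∀ y ∈ K, t • y ∈ K) {e : G} (he : e ∈ interior K)
    {g : E → G} {x : E} (hg : DifferentiableAt ℝ g x) (d : E) {s σ : ℝ}
    (hs : s • e - fderiv ℝ g x d ∈ K) (hsσ : s < σ) :
    ∀ᶠ α in 𝓝[>] 0, g (x + α • d) - g x - (α * σ) • e ∈ -K := by
  obtain ⟨ε, hε, hinterior⟩ := exists_smul_sub_mem_of_mem_interior hKcone he
  set D := fderiv ℝ g x d
  have hc : 0 < (σ - s) * ε := mul_pos (sub_pos.2 hsσ) hε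
  have hexpansion : ∀ᶠ α in 𝓝 (0 : ℝ), ‖g (x + α • d) - g x - α • D‖ ≤ (σ - s) * ε / 2 * ‖α‖ :=
    (hasLineDerivAt_iff_isLittleO_nhds_zero.1 (hg.hasFDerivAt.hasLineDerivAt d)).def
      (half_pos hc)
  filter_upwards [nhdsWithin_le_nhds hexpansion, self_mem_nhdsWithin] with α hα hαpos
  rw [Real.norm_of_nonneg (le_of_lt hαpos)] at hα
  have hsmall : α • (s • e - D) ∈ K := hKcone α (le_of_lt hαpos) _ hs
  have hslack : ((σ - s) * α) • e - (g (x + α • d) - g x - α • D) ∈ K :=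
    hinterior _ _ (by nlinarith [show (0 : ℝ) < α from hαpos])
  rw [Set.mem_neg]
  convert add_mem_of_convex_of_smul_mem_s10 hKconv hKcone hsmall hslack using 1
  module

end Cone

theorem statement10_general {n m p : ℕ} (K : Set (EuclideanSpace ℝ (Fin m)))
    (hKconv : Convex ℝ K)
    (hKcone : ∀ t : ℝ, 0 ≤ t → ∀ y ∈ K, t • y ∈ K)
    (e : EuclideanSpace ℝ (Fin m)) (he : e ∈ interior K)
    (ψ : EuclideanSpace ℝ (Fin m) → ℝ)
    (hψ : ∀ y, IsLeast {t : ℝ | t • e - y ∈ K} (ψ y))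
    (f : Fin p → EuclideanSpace ℝ (Fin n) → EuclideanSpace ℝ (Fin m))
    (hf : ∀ i, ContDiff ℝ 1 (f i))
    {ω : ℕ} (hω : 0 < ω) (a : Fin ω → Fin p)
    (xb d : EuclideanSpace ℝ (Fin n))
    (hd : Fcal ψ f hω a xb d < 0)
    (ρ : ℝ) (hρ1 : ρ < 1) :
    ∃ αt : ℝ, 0 < αt ∧ ∀ α : ℝ, 0 < α → α ≤ αt → ∀ j : Fin ω,
      f (a j) (xb + α • d) - f (a j) xb - (ρ * α * Fcal ψ f hω a xb d) • e ∈ -K := by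
  set F := Fcal ψ f hω a xb d
  have hdominates (j : Fin ω) : F • e - fderiv ℝ (f (a j)) xb d ∈ K :=
    smul_sub_mem_of_isLeast_le hKconv hKcone (interior_subset he) (hψ _)
      (Finset.le_sup' (fun j => ψ (fderiv ℝ (f (a j)) xb d)) (Finset.mem_univ j))
  have hall : ∀ᶠ α in 𝓝[>] (0 : ℝ), ∀ j : Fin ω,
      f (a j) (xb + α • d) - f (a j) xb - (α * (ρ * F)) • e ∈ -K :=
    eventually_all.2 fun j =>
      eventually_sub_sub_smul_mem_neg_of_smul_sub_fderiv_mem hKconv hKcone he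
        (((hf (a j)).differentiable one_ne_zero) xb) d (hdominates j) (by nlinarith)
  obtain ⟨αt, hαt, hIoc⟩ := mem_nhdsGT_iff_exists_Ioc_subset.1 hall
  refine ⟨αt, hαt, fun α hα0 hααt j => ?_⟩
  rw [show ρ * α * F = α * (ρ * F) by ring]
  exact hIoc ⟨hα0, hααt⟩ j

/-- If `𝓕^a(x̄, d) < 0` and `ρ ∈ (0,1)`, then there is `α̃ > 0` such
that for all `α ∈ (0, α̃]` and all `j`:
`f^{a_j}(x̄ + α•d) - f^{a_j}(x̄) - ρ·α·𝓕^a(x̄, d)·e ∈ -K`. -/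
theorem statement10 {n m p : ℕ} (K : Set (EuclideanSpace ℝ (Fin m)))
    (hKne : K.Nonempty) (hKclosed : IsClosed K) (hKconv : Convex ℝ K)
    (hKcone : ∀ t : ℝ, 0 ≤ t → ∀ y ∈ K, t • y ∈ K)
    (hKpointed : K ∩ (-K) = {0}) (hKsolid : (interior K).Nonempty)
    (e : EuclideanSpace ℝ (Fin m)) (he : e ∈ interior K)
    (ψ : EuclideanSpace ℝ (Fin m) → ℝ)
    (hψ : ∀ y, IsLeast {t : ℝ | t • e - y ∈ K} (ψ y))
    (f : Fin p → EuclideanSpace ℝ (Fin n) → EuclideanSpace ℝ (Fin m))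
    (hf : ∀ i, ContDiff ℝ 1 (f i))
    {ω : ℕ} (hω : 0 < ω) (a : Fin ω → Fin p)
    (xb d : EuclideanSpace ℝ (Fin n))
    (hd : Fcal ψ f hω a xb d < 0)
    (ρ : ℝ) (hρ0 : 0 < ρ) (hρ1 : ρ < 1) :
    ∃ αt : ℝ, 0 < αt ∧ ∀ α : ℝ, 0 < α → α ≤ αt → ∀ j : Fin ω,
      f (a j) (xb + α • d) - f (a j) xb - (ρ * α * Fcal ψ f hω a xb d) • e ∈ -K :=
  statement10_general K hKconv hKcone e he ψ hψ f hf hω a xb d hd ρ hρ1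
end

section
/- Suppose each map x ↦ ∇f^i(x) (i ∈ {1,…,p}) is Lipschitz with constant L > 0 (in operator norm) on a convex set containing x and x + α·d, and let L̄ > 0 be a Lipschitz constant of ψ_e on ℝ^m. Let σ ∈ (0,1), α > 0, and let a be an index tuple with 𝓕^a(x, d) < 0 and 𝓕^a(x + α·d, d) ≥ σ·𝓕^a(x, d). Then (σ − 1)·𝓕^a(x, d) ≤ L̄·L·α·‖d‖², and consequently 𝓕^a(x, d)²/‖d‖² ≤ L̄·L·α·𝓕^a(x, d)/(σ − 1). -/
open Set Pointwise

/-- Under `L`-Lipschitzness of the `∇f^i` on a convex set containing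
`x` and `x + α•d` and `L̄`-Lipschitzness of `ψ_e`, if `𝓕^a(x,d) < 0` and the curvature
condition `𝓕^a(x + α•d, d) ≥ σ·𝓕^a(x,d)` holds (`σ ∈ (0,1)`, `α > 0`), then
`(σ - 1)·𝓕^a(x,d) ≤ L̄·L·α·‖d‖²` and
`𝓕^a(x,d)²/‖d‖² ≤ L̄·L·α·𝓕^a(x,d)/(σ - 1)`. -/
theorem statement13 {n m p : ℕ} (K : Set (EuclideanSpace ℝ (Fin m)))
    (hKne : K.Nonempty) (hKclosed : IsClosed K) (hKconv : Convex ℝ K)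
    (hKcone : ∀ t : ℝ, 0 ≤ t → ∀ y ∈ K, t • y ∈ K)
    (hKpointed : K ∩ (-K) = {0}) (hKsolid : (interior K).Nonempty)
    (e : EuclideanSpace ℝ (Fin m)) (he : e ∈ interior K)
    (ψ : EuclideanSpace ℝ (Fin m) → ℝ)
    (hψ : ∀ y, IsLeast {t : ℝ | t • e - y ∈ K} (ψ y))
    (f : Fin p → EuclideanSpace ℝ (Fin n) → EuclideanSpace ℝ (Fin m))
    (hf : ∀ i, ContDiff ℝ 1 (f i))
    (L : ℝ) (hL : 0 < L)
    (x d : EuclideanSpace ℝ (Fin n)) (α : ℝ) (hα : 0 < α)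
    (S : Set (EuclideanSpace ℝ (Fin n))) (hSconv : Convex ℝ S)
    (hx : x ∈ S) (hxαd : x + α • d ∈ S)
    (hLip : ∀ i, ∀ v ∈ S, ∀ w ∈ S,
      ‖fderiv ℝ (f i) v - fderiv ℝ (f i) w‖ ≤ L * ‖v - w‖)
    (Lb : ℝ) (hLb : 0 < Lb)
    (hψLip : ∀ z w : EuclideanSpace ℝ (Fin m), |ψ z - ψ w| ≤ Lb * ‖z - w‖)
    (σ : ℝ) (hσ0 : 0 < σ) (hσ1 : σ < 1)
    {ω : ℕ} (hω : 0 < ω) (a : Fin ω → Fin p)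
    (hneg : Fcal ψ f hω a x d < 0)
    (hcurv : Fcal ψ f hω a (x + α • d) d ≥ σ * Fcal ψ f hω a x d) :
    (σ - 1) * Fcal ψ f hω a x d ≤ Lb * L * α * ‖d‖ ^ 2 ∧
    (Fcal ψ f hω a x d) ^ 2 / ‖d‖ ^ 2 ≤
      Lb * L * α * Fcal ψ f hω a x d / (σ - 1) := by
  -- 0 ∈ K
  obtain ⟨y0, hy0⟩ := hKne
  have h0K : (0 : EuclideanSpace ℝ (Fin m)) ∈ K := by
    simpa using hKcone 0 le_rfl y0 hy0
  -- ψ 0 ≥ 0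
  have hψ0 : 0 ≤ ψ 0 := by
    by_contra h
    push_neg at h
    have hmem : ψ 0 • e ∈ K := by simpa using (hψ 0).1
    have heK : e ∈ K := interior_subset he
    have hnegmem : (-(ψ 0)) • e ∈ K := hKcone (-(ψ 0)) (by linarith) e heK
    have h2 : ψ 0 • e ∈ K ∩ (-K) := ⟨hmem, by simpa [neg_smul] using hnegmem⟩
    rw [hKpointed] at h2
    have he0 : e = 0 := by
      rcases smul_eq_zero.mp (Set.mem_singleton_iff.mp h2) with h' | h'
      · exact absurd h' (by linarith)
      · exact h'
    -- then the defining set is all of ℝ, contradicting IsLeast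
    have := (hψ 0).2 (show ψ 0 - 1 ∈ {t : ℝ | t • e - 0 ∈ K} by simp [he0, h0K])
    linarith
  -- d ≠ 0
  have hd : d ≠ 0 := by
    intro hd0
    have : Fcal ψ f hω a x d = ψ 0 := by
      unfold Fcal
      rw [hd0]
      simp [Finset.sup'_const]
    rw [this] at hneg
    linarith
  have hdn : (0:ℝ) < ‖d‖ := norm_pos_iff.mpr hd
  have hd2 : (0:ℝ) < ‖d‖ ^ 2 := by positivity
  set F := Fcal ψ f hω a x d with hF
  -- key bound: Fcal at x+αd ≤ F + Lb*L*α*‖d‖^2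
  have hkey : Fcal ψ f hω a (x + α • d) d ≤ F + Lb * L * α * ‖d‖ ^ 2 := by
    unfold Fcal
    apply Finset.sup'_le
    intro j _
    set A := fderiv ℝ (f (a j)) (x + α • d)
    set B := fderiv ℝ (f (a j)) x
    have h1 : ψ (A d) - ψ (B d) ≤ Lb * ‖A d - B d‖ :=
      (abs_le.mp (hψLip (A d) (B d))).2
    have h2 : ‖A d - B d‖ ≤ ‖A - B‖ * ‖d‖ := by
      have := (A - B).le_opNorm d
      simpa using this
    have h3 : ‖A - B‖ ≤ L * (α * ‖d‖) := by
      have := hLip (a j) (x + α • d) hxαd x hx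
      simpa [norm_smul, abs_of_pos hα] using this
    have h4 : ψ (B d) ≤ F := by
      rw [hF]
      exact Finset.le_sup' (fun j => ψ (fderiv ℝ (f (a j)) x d)) (Finset.mem_univ j)
    have h5 : ‖A d - B d‖ ≤ L * α * ‖d‖ ^ 2 := by
      calc ‖A d - B d‖ ≤ ‖A - B‖ * ‖d‖ := h2
        _ ≤ L * (α * ‖d‖) * ‖d‖ := by
            exact mul_le_mul_of_nonneg_right h3 (norm_nonneg d)
        _ = L * α * ‖d‖ ^ 2 := by ring
    nlinarith [hLb.le, norm_nonneg (A d - B d)]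
  have key : (σ - 1) * F ≤ Lb * L * α * ‖d‖ ^ 2 := by nlinarith [hcurv]
  refine ⟨key, ?_⟩
  have hσ' : σ - 1 < 0 := by linarith
  have h4 : (Lb * L * α * ‖d‖ ^ 2) * F ≤ (σ - 1) * F * F :=
    mul_le_mul_of_nonpos_right key hneg.le
  have expand : F ^ 2 / ‖d‖ ^ 2 - Lb * L * α * F / (σ - 1)
      = ((σ - 1) * F * F - (Lb * L * α * ‖d‖ ^ 2) * F) / ((σ - 1) * ‖d‖ ^ 2) := by
    rw [div_sub_div _ _ hd2.ne' (by linarith : σ - 1 ≠ 0)]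
    congr 1
    · ring
    · ring
  have hden : (σ - 1) * ‖d‖ ^ 2 < 0 := mul_neg_of_neg_of_pos hσ' hd2
  have hq : ((σ - 1) * F * F - (Lb * L * α * ‖d‖ ^ 2) * F) / ((σ - 1) * ‖d‖ ^ 2) ≤ 0 :=
    div_nonpos_of_nonneg_of_nonpos (by linarith) hden.le
  linarith [expand ▸ hq]
end

section
/- Fix x ∈ ℝ^n, an index tuple a, μ ∈ (0,1), and vectors u, d' ∈ ℝ^n with 𝓕^a(x, u) < 0. Let β ≥ 0 be such that either 𝓕^a(x, d') ≤ 0, or 𝓕^a(x, d') > 0 and β ≤ −μ·𝓕^a(x, u)/𝓕^a(x, d'). Then the direction d := u + β·d' satisfies the sufficient descent condition 𝓕^a(x, d) ≤ (1 − μ)·𝓕^a(x, u) < 0; in particular d is a K-descent direction at x. -/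
open Set Pointwise

/-- Given `𝓕^a(x, u) < 0`, `μ ∈ (0,1)` and `β ≥ 0` with either
`𝓕^a(x, d') ≤ 0`, or `𝓕^a(x, d') > 0` and `β ≤ -μ·𝓕^a(x,u)/𝓕^a(x,d')`, the
direction `d = u + β•d'` satisfies the sufficient descent condition
`𝓕^a(x, d) ≤ (1 - μ)·𝓕^a(x, u) < 0`; in particular `d` is a `K`-descent direction. -/
theorem statement15 {n m p : ℕ} (K : Set (EuclideanSpace ℝ (Fin m)))
    (hKne : K.Nonempty) (hKclosed : IsClosed K) (hKconv : Convex ℝ K)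
    (hKcone : ∀ t : ℝ, 0 ≤ t → ∀ y ∈ K, t • y ∈ K)
    (hKpointed : K ∩ (-K) = {0}) (hKsolid : (interior K).Nonempty)
    (e : EuclideanSpace ℝ (Fin m)) (he : e ∈ interior K)
    (ψ : EuclideanSpace ℝ (Fin m) → ℝ)
    (hψ : ∀ y, IsLeast {t : ℝ | t • e - y ∈ K} (ψ y))
    (f : Fin p → EuclideanSpace ℝ (Fin n) → EuclideanSpace ℝ (Fin m))
    (hf : ∀ i, ContDiff ℝ 1 (f i))
    {ω : ℕ} (hω : 0 < ω) (a : Fin ω → Fin p)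
    (x : EuclideanSpace ℝ (Fin n)) (μ : ℝ) (hμ0 : 0 < μ) (hμ1 : μ < 1)
    (u d' : EuclideanSpace ℝ (Fin n))
    (hu : Fcal ψ f hω a x u < 0)
    (β : ℝ) (hβ : 0 ≤ β)
    (hcase : Fcal ψ f hω a x d' ≤ 0 ∨
      (0 < Fcal ψ f hω a x d' ∧
        β ≤ -μ * Fcal ψ f hω a x u / Fcal ψ f hω a x d')) :
    Fcal ψ f hω a x (u + β • d') ≤ (1 - μ) * Fcal ψ f hω a x u ∧
    (1 - μ) * Fcal ψ f hω a x u < 0 ∧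
    Fcal ψ f hω a x (u + β • d') < 0 := by
  have Fune : (Finset.univ : Finset (Fin ω)).Nonempty := Finset.univ_nonempty_iff.mpr ⟨⟨0, hω⟩⟩
  -- K is closed under addition
  have hKadd : ∀ y ∈ K, ∀ z ∈ K, y + z ∈ K := by
    intro y hy z hz
    have h2 : ((1:ℝ)/2) • y + ((1:ℝ)/2) • z ∈ K :=
      hKconv hy hz (by norm_num) (by norm_num) (by norm_num)
    have := hKcone 2 (by norm_num) _ h2
    simpa [smul_smul, smul_add] using this
  -- subadditivity of ψ
  have hsub : ∀ y z, ψ (y + z) ≤ ψ y + ψ z := by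
    intro y z
    refine (hψ (y + z)).2 ?_
    have : (ψ y • e - y) + (ψ z • e - z) ∈ K := hKadd _ (hψ y).1 _ (hψ z).1
    simpa [add_smul, sub_add_sub_comm] using this
  -- ψ (β • z) ≤ β * ψ z
  have hhom : ∀ z, ψ (β • z) ≤ β * ψ z := by
    intro z
    refine (hψ (β • z)).2 ?_
    have := hKcone β hβ _ (hψ z).1
    simpa [smul_sub, smul_smul, mul_comm] using this
  set Fu := Fcal ψ f hω a x u with hFu
  set Fd := Fcal ψ f hω a x d' with hFd
  have key : Fcal ψ f hω a x (u + β • d') ≤ Fu + β * Fd := by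
    rw [Fcal]
    apply Finset.sup'_le
    intro j _
    have hlin : (fderiv ℝ (f (a j)) x) (u + β • d')
        = (fderiv ℝ (f (a j)) x) u + β • (fderiv ℝ (f (a j)) x) d' := by
      simp [map_add, map_smul]
    rw [hlin]
    have h1 : ψ ((fderiv ℝ (f (a j)) x) u + β • (fderiv ℝ (f (a j)) x) d')
        ≤ ψ ((fderiv ℝ (f (a j)) x) u) + β * ψ ((fderiv ℝ (f (a j)) x) d') :=
      le_trans (hsub _ _) (by gcongr; exact hhom _)
    refine h1.trans ?_
    have h2 : ψ ((fderiv ℝ (f (a j)) x) u) ≤ Fu :=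
      Finset.le_sup' (fun j => ψ ((fderiv ℝ (f (a j)) x) u)) (Finset.mem_univ j)
    have h3 : ψ ((fderiv ℝ (f (a j)) x) d') ≤ Fd :=
      Finset.le_sup' (fun j => ψ ((fderiv ℝ (f (a j)) x) d')) (Finset.mem_univ j)
    have := mul_le_mul_of_nonneg_left h3 hβ
    linarith
  have hβFd : β * Fd ≤ -μ * Fu := by
    rcases hcase with h | ⟨hpos, hle⟩
    · nlinarith
    · have := (le_div_iff₀ hpos).mp hle
      linarith
  have h1 : Fcal ψ f hω a x (u + β • d') ≤ (1 - μ) * Fu := by nlinarith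
  have h2 : (1 - μ) * Fu < 0 := by nlinarith
  exact ⟨h1, h2, lt_of_le_of_lt h1 h2⟩
end
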